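/- Let α, β ∈ R belong to distinct σ-orbits with π(α) = π(β). Then for x ∈ g_α, y ∈ g_{-β}, and any j ∈ ℤ, one has [π_j(x), π_{-j}(y)] = 0. -/

import Mathlib

open Finset

section IARADefs

variable (F L : Type*) [Field F] [LieRing L] [LieAlgebra F L]

/-- The root space of a toral subalgebra `T` attached to a linear functional `α`
(viewed as a functional on `L`; only its values on `T` matter). -/
def gSpace (T : LieSubalgebra F L) (α : L →ₗ[F] F) : Submodule F L where
  carrier := {x | ∀ t ∈ T, ⁅t, x⁆ = α t • x}
  add_mem' := by
    intro a b ha hb t ht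
    rw [lie_add, ha t ht, hb t ht, smul_add]
  zero_mem' := by intro t ht; simp
  smul_mem' := by
    intro c x hx t ht
    rw [lie_smul, hx t ht, smul_comm]

/-- `(g, T)` is a toral pair with root system (a set of representatives) `R`. -/
structure IsToralPair (T : LieSubalgebra F L) (R : Set (L →ₗ[F] F)) : Prop where
  root_ne : ∀ α ∈ R, gSpace F L T α ≠ ⊥
  decomp : (⨆ α ∈ R, gSpace F L T α) = ⊤
  complete : ∀ β : L →ₗ[F] F, gSpace F L T β ≠ ⊥ → ∃ α ∈ R, ∀ t ∈ T, α t = β t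

/-- (IA1): `B` is an invariant nondegenerate symmetric bilinear form on `g`
whose restriction to `T` is nondegenerate. -/
structure IsInvForm (B : LinearMap.BilinForm F L) (T : LieSubalgebra F L) : Prop where
  symm : ∀ x y : L, B x y = B y x
  inv : ∀ x y z : L, B ⁅x, y⁆ z = B x ⁅y, z⁆
  nondeg : ∀ x : L, (∀ y : L, B x y = 0) → x = 0
  nondegT : ∀ t ∈ T, (∀ s ∈ T, B t s = 0) → t = 0

/-- (IA2). -/
def IA2 (T : LieSubalgebra F L) (R : Set (L →ₗ[F] F)) : Prop :=
  ∀ α ∈ R, (∃ t ∈ T, α t ≠ 0) →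
    ∃ e ∈ gSpace F L T α, ∃ f ∈ gSpace F L T (-α), ⁅e, f⁆ ≠ 0 ∧ ⁅e, f⁆ ∈ T

/-- (IA2)′ (division condition). -/
def IA2' (T : LieSubalgebra F L) (R : Set (L →ₗ[F] F)) : Prop :=
  ∀ α ∈ R, (∃ t ∈ T, α t ≠ 0) → ∀ e ∈ gSpace F L T α, e ≠ 0 →
    ∃ f ∈ gSpace F L T (-α), ⁅e, f⁆ ≠ 0 ∧ ⁅e, f⁆ ∈ T

/-- (IA3): for nonisotropic roots `α` (i.e. `(α,α) = B t_α t_α ≠ 0` for a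
representative `t_α ∈ T` of `α`), `ad x` is locally nilpotent for `x ∈ g_α`. -/
def IA3 (B : LinearMap.BilinForm F L) (T : LieSubalgebra F L)
    (R : Set (L →ₗ[F] F)) : Prop :=
  ∀ α ∈ R, ∀ tα ∈ T, (∀ t ∈ T, α t = B tα t) → B tα tα ≠ 0 →
    ∀ x ∈ gSpace F L T α, ∀ y : L, ∃ n : ℕ, ((LieAlgebra.ad F L x) ^ n) y = 0

/-- An invariant affine reflection algebra. -/
structure IsIARA (B : LinearMap.BilinForm F L) (T : LieSubalgebra F L)
    (R : Set (L →ₗ[F] F)) : Prop where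
  nonzero : ∃ x : L, x ≠ 0
  toral : IsToralPair F L T R
  ia1 : IsInvForm F L B T
  ia2 : IA2 F L T R
  ia3 : IA3 F L B T R

/-- A division invariant affine reflection algebra. -/
structure IsDivIARA (B : LinearMap.BilinForm F L) (T : LieSubalgebra F L)
    (R : Set (L →ₗ[F] F)) : Prop where
  nonzero : ∃ x : L, x ≠ 0
  toral : IsToralPair F L T R
  ia1 : IsInvForm F L B T
  ia2' : IA2' F L T R
  ia3 : IA3 F L B T R

variable {F L}

/-- (A4): the centralizer of `T⁰` in `g⁰` is contained in `g₀`. -/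
def A4Cond (T : LieSubalgebra F L) (σ : L ≃ₗ[F] L) : Prop :=
  ∀ x : L, σ x = x → (∀ t ∈ T, σ t = t → ⁅t, x⁆ = 0) → ∀ t ∈ T, ⁅t, x⁆ = 0

/-- The projection `π = (1/m) ∑ σ^i` of `g` onto the fixed points of `σ`. -/
noncomputable def piL (σ : L ≃ₗ[F] L) (m : ℕ) : L →ₗ[F] L :=
  (m : F)⁻¹ • ∑ i ∈ Finset.range m, ((σ ^ i : L ≃ₗ[F] L) : L →ₗ[F] L)

/-- The induced projection on functionals: `π(α) = (1/m) ∑ σ^i(α)`,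
`σ(α) = α ∘ σ⁻¹`. -/
noncomputable def piF (σ : L ≃ₗ[F] L) (m : ℕ) (α : L →ₗ[F] F) : L →ₗ[F] F :=
  (m : F)⁻¹ • ∑ i ∈ Finset.range m, α ∘ₗ ((σ⁻¹ ^ i : L ≃ₗ[F] L) : L →ₗ[F] L)

/-- The projection `π_j = (1/m) ∑ ζ^{-ji} σ^i` onto the `ζ^j`-eigenspace. -/
noncomputable def piJ (σ : L ≃ₗ[F] L) (m : ℕ) (ζ : F) (j : ℤ) : L →ₗ[F] L :=
  (m : F)⁻¹ • ∑ i ∈ Finset.range m,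
    ζ ^ (-(j * (i : ℤ))) • ((σ ^ i : L ≃ₗ[F] L) : L →ₗ[F] L)

/-- `x̄_j = ∑_{i=0}^{m/ℓ-1} ζ^{-jiℓ} σ^{iℓ}(x)`. -/
noncomputable def xbar (σ : L ≃ₗ[F] L) (m ℓ : ℕ) (ζ : F) (j : ℤ) (x : L) : L :=
  ∑ i ∈ Finset.range (m / ℓ), ζ ^ (-(j * (i : ℤ) * (ℓ : ℤ))) • ((σ ^ (i * ℓ)) x)

/-- Indecomposability of a set of roots with respect to a pairing `p`. -/
def Indecomposable {α : Type*} (p : α → α → F) (R : Set α) : Prop :=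
  ¬ ∃ R₁ R₂ : Set α, R₁.Nonempty ∧ R₂.Nonempty ∧ R₁ ∩ R₂ = ∅ ∧
      R₁ ∪ R₂ = {x ∈ R | p x x ≠ 0} ∧ ∀ x ∈ R₁, ∀ y ∈ R₂, p x y = 0

end IARADefs

/-!
Since `σ` acts on `π_j x` by `ζ ^ j` and on `π_{-j} y` by `ζ ^ (-j)`, the bracket
`z = ⁅π_j x, π_{-j} y⁆` is `σ`-fixed, and a `σ`-fixed `t ∈ T` acts on it by
`π(α)(t) - π(β)(t) = 0`; so (A4) makes `z` commute with all of `T`. On the other hand `z` is a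
combination of the brackets `⁅σ^i x, σ^k y⁆`, root vectors for `σ^i α - σ^k β`, and these
functionals are nonzero on `T` because `α` and `β` lie in distinct orbits. Over an infinite field
some `t₀ ∈ T` lies off all their kernels, and `ad t₀` kills `z` although `z` is a sum of
eigenvectors of `ad t₀` with nonzero eigenvalues; hence `z = 0`.
-/

lemma inv_pow_eq_pow_sub_of_pow_eq_one {G : Type*} [Group G] {g : G} {m k : ℕ}
    (hg : g ^ m = 1) (hk : k ≤ m) : g⁻¹ ^ k = g ^ (m - k) := by
  rw [inv_pow]
  exact inv_eq_of_mul_eq_one_right (by rw [← pow_add, Nat.add_sub_cancel' hk, hg])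

lemma sum_range_succ_eq_sum_range {A : Type*} [AddCommGroup A] {m : ℕ} (f : ℕ → A)
    (h : f m = f 0) : ∑ i ∈ range m, f (i + 1) = ∑ i ∈ range m, f i := by
  have := (sum_range_succ' f m).symm.trans (sum_range_succ f m)
  rwa [h, add_left_inj] at this

lemma Module.End.eq_zero_of_mem_iSup_eigenspace_of_apply_eq_zero {R M : Type*} [CommRing R]
    [IsDomain R] [AddCommGroup M] [Module R M] [IsTorsionFree R M] {f : Module.End R M} {v : M}
    (hv : v ∈ ⨆ (μ : R) (_ : μ ≠ 0), f.eigenspace μ) (hfv : f v = 0) : v = 0 :=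
  Submodule.disjoint_def.mp
    (f.eigenspaces_iSupIndep.disjoint_biSup (x := 0) (y := {μ | μ ≠ 0}) (by simp)) v
    (Module.End.mem_eigenspace_iff.mpr (by rw [hfv, zero_smul])) hv

lemma exists_mem_apply_inv_pow_ne {F M : Type*} [Field F] [AddCommGroup M] [Module F M]
    {σ : M ≃ₗ[F] M} {m : ℕ} {S : Set M} (hσm : σ ^ m = 1) (hσS : Set.MapsTo σ S S)
    {α β : M →ₗ[F] F} (horb : ∀ i : ℕ, ∃ t ∈ S, α ((σ⁻¹ ^ i) t) ≠ β t) (i : ℕ) {k : ℕ}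
    (hk : k ≤ m) : ∃ t ∈ S, α ((σ⁻¹ ^ i) t) ≠ β ((σ⁻¹ ^ k) t) := by
  obtain ⟨s, hs, hne⟩ := horb (i + (m - k))
  have hσk : σ ^ k = σ⁻¹ ^ (m - k) := by
    rw [inv_pow_eq_pow_sub_of_pow_eq_one hσm (Nat.sub_le m k), Nat.sub_sub_self hk]
  refine ⟨(σ ^ k) s, by rw [LinearEquiv.coe_pow]; exact hσS.iterate k hs, ?_⟩
  have hσk' : σ⁻¹ ^ k * σ ^ k = 1 := by rw [inv_pow, inv_mul_cancel]
  rwa [← LinearEquiv.mul_apply, ← LinearEquiv.mul_apply, hσk', hσk, ← pow_add]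

section Lie

variable {F L : Type*} [Field F] [LieRing L] [LieAlgebra F L] {T : LieSubalgebra F L}
  {σ : L ≃ₗ[F] L}

lemma piJ_apply (m : ℕ) (ζ : F) (j : ℤ) (u : L) :
    piJ σ m ζ j u = (m : F)⁻¹ • ∑ i ∈ range m, ζ ^ (-(j * i)) • (σ ^ i) u := by
  simp [piJ]

lemma apply_piJ {m : ℕ} {ζ : F} (hσm : σ ^ m = 1) (hζm : ζ ^ m = 1) (hζ : ζ ≠ 0) (j : ℤ)
    (u : L) : σ (piJ σ m ζ j u) = ζ ^ j • piJ σ m ζ j u := by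
  rw [piJ_apply, map_smul, map_sum]
  set f : ℕ → L := fun i => ζ ^ (-(j * i)) • (σ ^ i) u
  have hshift : ∀ i, σ (f i) = ζ ^ j • f (i + 1) := fun i => by
    simp only [f, map_smul, smul_smul, ← zpow_add₀ hζ, ← LinearEquiv.mul_apply, ← pow_succ']
    congr 2
    push_cast
    ring
  have hperiod : f m = f 0 := by
    simp only [f, hσm, pow_zero, Nat.cast_zero, mul_zero, neg_zero, zpow_zero,
      show -(j * m) = (m : ℤ) * -j by ring, zpow_mul, zpow_natCast, hζm, one_zpow]
  change (m : F)⁻¹ • ∑ i ∈ range m, σ (f i) = ζ ^ j • (m : F)⁻¹ • ∑ i ∈ range m, f i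
  simp only [hshift, ← smul_sum, sum_range_succ_eq_sum_range f hperiod, smul_comm _ (ζ ^ j)]

lemma pow_apply_lie (hσ : ∀ u v : L, σ ⁅u, v⁆ = ⁅σ u, σ v⁆) (n : ℕ) (u v : L) :
    (σ ^ n) ⁅u, v⁆ = ⁅(σ ^ n) u, (σ ^ n) v⁆ := by
  rw [LinearEquiv.coe_pow]
  exact Function.Semiconj₂.iterate hσ n u v

lemma lie_piJ_of_apply_eq_self (hσ : ∀ u v : L, σ ⁅u, v⁆ = ⁅σ u, σ v⁆) {t : L} (ht : σ t = t)
    (m : ℕ) (ζ : F) (j : ℤ) (u : L) : ⁅t, piJ σ m ζ j u⁆ = piJ σ m ζ j ⁅t, u⁆ := by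
  have hfix : ∀ i : ℕ, (σ ^ i) t = t := fun i => by
    rw [LinearEquiv.coe_pow]; exact Function.iterate_fixed ht i
  simp only [piJ_apply, lie_smul, lie_sum, pow_apply_lie hσ, hfix]

lemma lie_mem_gSpace_add {α β : L →ₗ[F] F} {x y : L} (hx : x ∈ gSpace F L T α)
    (hy : y ∈ gSpace F L T β) : ⁅x, y⁆ ∈ gSpace F L T (α + β) := fun t ht => by
  rw [leibniz_lie, hx t ht, hy t ht, smul_lie, lie_smul, LinearMap.add_apply, add_smul,
    add_comm]

lemma apply_mem_gSpace (hσ : ∀ u v : L, σ ⁅u, v⁆ = ⁅σ u, σ v⁆) (hσT : Set.MapsTo (⇑(σ⁻¹)) T T)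
    {α : L →ₗ[F] F} {x : L} (hx : x ∈ gSpace F L T α) :
    σ x ∈ gSpace F L T (α ∘ₗ (σ⁻¹ : L ≃ₗ[F] L).toLinearMap) := fun t ht => by
  have hσσ : σ (σ⁻¹ t) = t := by rw [← LinearEquiv.mul_apply, mul_inv_cancel]; rfl
  rw [← hσσ, ← hσ, hx _ (hσT ht), map_smul, hσσ]
  rfl

lemma pow_apply_mem_gSpace (hσ : ∀ u v : L, σ ⁅u, v⁆ = ⁅σ u, σ v⁆)
    (hσT : Set.MapsTo (⇑(σ⁻¹)) T T) {α : L →ₗ[F] F} {x : L} (hx : x ∈ gSpace F L T α) (i : ℕ) :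
    (σ ^ i) x ∈ gSpace F L T (α ∘ₗ (σ⁻¹ ^ i : L ≃ₗ[F] L).toLinearMap) := by
  rw [inv_pow]
  refine apply_mem_gSpace (pow_apply_lie hσ i) ?_ hx
  rw [← inv_pow, LinearEquiv.coe_pow]
  exact hσT.iterate i

lemma mem_eigenspace_ad_of_mem_gSpace {α : L →ₗ[F] F} {x t : L} (hx : x ∈ gSpace F L T α)
    (ht : t ∈ T) : x ∈ (LieAlgebra.ad F L t).eigenspace (α t) :=
  Module.End.mem_eigenspace_iff.mpr (hx t ht)

lemma lie_piJ_mem_iSup_eigenspace_ad {m : ℕ} {ζ : F} {t x y : L} (ht : t ∈ T)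
    {a b : ℕ → L →ₗ[F] F} (hx : ∀ i < m, (σ ^ i) x ∈ gSpace F L T (a i))
    (hy : ∀ k < m, (σ ^ k) y ∈ gSpace F L T (b k)) (hab : ∀ i < m, ∀ k < m, (a i + b k) t ≠ 0)
    (j j' : ℤ) :
    ⁅piJ σ m ζ j x, piJ σ m ζ j' y⁆ ∈
      ⨆ (μ : F) (_ : μ ≠ 0), (LieAlgebra.ad F L t).eigenspace μ := by
  simp only [piJ_apply, smul_lie, lie_smul, sum_lie_sum]
  refine Submodule.smul_mem _ _ (Submodule.smul_mem _ _ (Submodule.sum_mem _ fun i hi =>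
    Submodule.sum_mem _ fun k hk => Submodule.smul_mem _ _ (Submodule.smul_mem _ _ ?_)))
  rw [mem_range] at hi hk
  exact Submodule.mem_iSup_of_mem _ (Submodule.mem_iSup_of_mem (hab i hi k hk)
    (mem_eigenspace_ad_of_mem_gSpace (lie_mem_gSpace_add (hx i hi) (hy k hk)) ht))

end Lie

theorem stmt11_general {F L : Type*} [Field F] [CharZero F] [LieRing L] [LieAlgebra F L]
    (T : LieSubalgebra F L)
    (m : ℕ) (ζ : F) (hζ : IsPrimitiveRoot ζ m)
    (σ : L ≃ₗ[F] L) (hσLie : ∀ x y : L, σ ⁅x, y⁆ = ⁅σ x, σ y⁆)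
    (hσm : σ ^ m = 1) (hσT : ∀ t ∈ T, σ t ∈ T)
    (hA4 : A4Cond T σ)
    (α β : L →ₗ[F] F)
    (horb : ∀ i : ℕ, ∃ t ∈ T, α ((σ⁻¹ ^ i) t) ≠ β t)
    (hπ : ∀ t ∈ T, σ t = t → α t = β t)
    (x y : L) (hx : x ∈ gSpace F L T α) (hy : y ∈ gSpace F L T (-β)) (j : ℤ) :
    ⁅piJ σ m ζ j x, piJ σ m ζ (-j) y⁆ = 0 := by
  rcases Nat.eq_zero_or_pos m with rfl | hm
  · simp [piJ]
  have hζ0 : ζ ≠ 0 := hζ.ne_zero hm.ne'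
  have hσz : σ ⁅piJ σ m ζ j x, piJ σ m ζ (-j) y⁆ = ⁅piJ σ m ζ j x, piJ σ m ζ (-j) y⁆ := by
    rw [hσLie, apply_piJ hσm hζ.pow_eq_one hζ0, apply_piJ hσm hζ.pow_eq_one hζ0, smul_lie,
      lie_smul, smul_smul, ← zpow_add₀ hζ0, add_neg_cancel, zpow_zero, one_smul]
  have hTz := hA4 _ hσz fun t ht hσt => by
    rw [leibniz_lie, lie_piJ_of_apply_eq_self hσLie hσt, lie_piJ_of_apply_eq_self hσLie hσt,
      hx t ht, hy t ht, map_smul, map_smul, smul_lie, lie_smul, LinearMap.neg_apply,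
      hπ t ht hσt, neg_smul, add_neg_cancel]
  have hσinvT : Set.MapsTo (⇑(σ⁻¹)) T T := by
    rw [← pow_one σ⁻¹, inv_pow_eq_pow_sub_of_pow_eq_one hσm hm, LinearEquiv.coe_pow]
    exact Set.MapsTo.iterate hσT _
  obtain ⟨t₀, ht₀, hne⟩ := Module.Dual.exists_forall_mem_ne_zero_of_forall_exists T.toSubmodule
    (fun p : Fin m × Fin m => α ∘ₗ (σ⁻¹ ^ (p.1 : ℕ) : L ≃ₗ[F] L).toLinearMap +
      (-β) ∘ₗ (σ⁻¹ ^ (p.2 : ℕ) : L ≃ₗ[F] L).toLinearMap) fun p => by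
    obtain ⟨t, ht, hne⟩ := exists_mem_apply_inv_pow_ne hσm hσT horb p.1 p.2.is_lt.le
    exact ⟨t, ht, by simpa [sub_eq_zero, ← sub_eq_add_neg] using hne⟩
  refine Module.End.eq_zero_of_mem_iSup_eigenspace_of_apply_eq_zero
    (f := LieAlgebra.ad F L t₀) ?_ (hTz t₀ ht₀)
  exact lie_piJ_mem_iSup_eigenspace_ad ht₀ (fun i _ => pow_apply_mem_gSpace hσLie hσinvT hx i)
    (fun k _ => pow_apply_mem_gSpace hσLie hσinvT hy k) (fun i hi k hk => hne (⟨i, hi⟩, ⟨k, hk⟩))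
    j (-j)

/-- if `α`, `β` are roots in distinct `σ`-orbits with
`π(α) = π(β)` then `[π_j(x), π_{-j}(y)] = 0` for `x ∈ g_α`, `y ∈ g_{-β}`. -/
theorem stmt11 {F L : Type*} [Field F] [CharZero F] [LieRing L] [LieAlgebra F L]
    (T : LieSubalgebra F L) (R : Set (L →ₗ[F] F))
    (B : LinearMap.BilinForm F L)
    (htoral : IsToralPair F L T R) (hIA1 : IsInvForm F L B T)
    (hIA2 : IA2 F L T R)
    (m : ℕ) (hm : 0 < m) (ζ : F) (hζ : IsPrimitiveRoot ζ m)
    (σ : L ≃ₗ[F] L) (hσLie : ∀ x y : L, σ ⁅x, y⁆ = ⁅σ x, σ y⁆)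
    (hσm : σ ^ m = 1) (hσT : ∀ t ∈ T, σ t ∈ T)
    (hσB : ∀ x y : L, B (σ x) (σ y) = B x y)
    (hA4 : A4Cond T σ)
    (α β : L →ₗ[F] F) (hα : α ∈ R) (hβ : β ∈ R)
    (horb : ∀ i : ℕ, ∃ t ∈ T, α ((σ⁻¹ ^ i) t) ≠ β t)
    (hπ : ∀ t ∈ T, σ t = t → α t = β t)
    (x y : L) (hx : x ∈ gSpace F L T α) (hy : y ∈ gSpace F L T (-β)) (j : ℤ) :
    ⁅piJ σ m ζ j x, piJ σ m ζ (-j) y⁆ = 0 :=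
  stmt11_general T m ζ hζ σ hσLie hσm hσT hA4 α β horb hπ x y hx hy j
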